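/- For any two random variables X and Y taking values in finite sets, there exist a random variable S taking values in a finite set S, with S independent of X, and a function g : X × S → Y such that Y = g(X, S) almost surely. -/

import Mathlib

/-!
Let `S` be a random function `α → β`, drawn independently of `X`, whose values `S a` are
independent with the conditional laws of `Y` given `X = a`. Then `(X, S X)` has the law of
`(X, Y)`, so `g x s = s x` works. The sample space is `α × (α → β)`, relabelled by `Fin m`.
-/

open Finset
open scoped Classical

noncomputable section

/-- Probability that the random variable `X` takes the value `a`, under the
probability mass function `μ` on the finite sample space `Ω`. -/
def pr {Ω α : Type*} [Fintype Ω] (μ : Ω → ℝ) (X : Ω → α) (a : α) : ℝ :=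
  ∑ ω, if X ω = a then μ ω else 0

/-- `μ` is a probability mass function. -/
def IsPMF {Ω : Type*} [Fintype Ω] (μ : Ω → ℝ) : Prop :=
  (∀ ω, 0 ≤ μ ω) ∧ ∑ ω, μ ω = 1

/-- Shannon entropy (base 2) of a finite random variable. -/
def ent {Ω α : Type*} [Fintype Ω] [Fintype α] (μ : Ω → ℝ) (X : Ω → α) : ℝ :=
  -∑ a, pr μ X a * Real.logb 2 (pr μ X a)

/-- Mutual information `I(X;Y)` (base 2). -/
def mi {Ω α β : Type*} [Fintype Ω] [Fintype α] [Fintype β]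
    (μ : Ω → ℝ) (X : Ω → α) (Y : Ω → β) : ℝ :=
  ent μ X + ent μ Y - ent μ (fun ω => (X ω, Y ω))

/-- Conditional entropy `H(X|Y)` (base 2). -/
def cent {Ω α β : Type*} [Fintype Ω] [Fintype α] [Fintype β]
    (μ : Ω → ℝ) (X : Ω → α) (Y : Ω → β) : ℝ :=
  ent μ (fun ω => (X ω, Y ω)) - ent μ Y

/-- Conditional mutual information `I(X;Y|Z)` (base 2). -/
def cmi {Ω α β γ : Type*} [Fintype Ω] [Fintype α] [Fintype β] [Fintype γ]
    (μ : Ω → ℝ) (X : Ω → α) (Y : Ω → β) (Z : Ω → γ) : ℝ :=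
  ent μ (fun ω => (X ω, Z ω)) + ent μ (fun ω => (Y ω, Z ω))
    - ent μ (fun ω => (X ω, Y ω, Z ω)) - ent μ Z

/-- Independence of two finite random variables. -/
def IndepRV {Ω α β : Type*} [Fintype Ω] (μ : Ω → ℝ) (X : Ω → α) (Y : Ω → β) : Prop :=
  ∀ a b, pr μ (fun ω => (X ω, Y ω)) (a, b) = pr μ X a * pr μ Y b

section Pr

variable {Ω Ω' α β : Type*} [Fintype Ω] [Fintype Ω']

lemma pr_nonneg {μ : Ω → ℝ} (hμ : ∀ ω, 0 ≤ μ ω) (X : Ω → α) (a : α) : 0 ≤ pr μ X a :=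
  sum_nonneg fun ω _ => by split_ifs <;> simp [hμ ω]

lemma sum_pr [Fintype α] (μ : Ω → ℝ) (X : Ω → α) : ∑ a, pr μ X a = ∑ ω, μ ω := by
  simp only [pr]
  rw [sum_comm]
  simp

lemma sum_pr_prodMk [Fintype β] (μ : Ω → ℝ) (X : Ω → α) (Y : Ω → β) (a : α) :
    ∑ b, pr μ (fun ω => (X ω, Y ω)) (a, b) = pr μ X a := by
  simp only [pr, Prod.mk.injEq]
  rw [sum_comm]
  refine sum_congr rfl fun ω _ => ?_
  split_ifs with h <;> simp [h]

lemma pr_comp_equiv (e : Ω ≃ Ω') (μ : Ω → ℝ) (X : Ω → α) (a : α) :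
    pr (fun ω' => μ (e.symm ω')) (fun ω' => X (e.symm ω')) a = pr μ X a :=
  e.symm.sum_comp fun ω => if X ω = a then μ ω else 0

lemma IsPMF.comp_equiv {μ : Ω → ℝ} (hμ : IsPMF μ) (e : Ω ≃ Ω') :
    IsPMF fun ω' => μ (e.symm ω') :=
  ⟨fun _ => hμ.1 _, (e.symm.sum_comp μ).trans hμ.2⟩

lemma IndepRV.comp_equiv {μ : Ω → ℝ} {X : Ω → α} {Y : Ω → β} (h : IndepRV μ X Y)
    (e : Ω ≃ Ω') :
    IndepRV (fun ω' => μ (e.symm ω')) (fun ω' => X (e.symm ω')) (fun ω' => Y (e.symm ω')) := by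
  intro a b
  rw [pr_comp_equiv e μ (fun ω => (X ω, Y ω)), pr_comp_equiv, pr_comp_equiv, h]

end Pr

section CondDist

variable {Ω α β : Type*} [Fintype Ω] [Fintype β]

/-- Where `X = a` has probability zero any law will do; the point mass at `b₀` keeps it a PMF. -/
def condDist (μ : Ω → ℝ) (X : Ω → α) (Y : Ω → β) (b₀ : β) (a : α) (b : β) : ℝ :=
  if pr μ X a = 0 then (if b = b₀ then 1 else 0)
  else pr μ (fun ω => (X ω, Y ω)) (a, b) / pr μ X a

variable {μ : Ω → ℝ} (hμ : ∀ ω, 0 ≤ μ ω) (X : Ω → α) (Y : Ω → β) (b₀ : β)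
include hμ

lemma isPMF_condDist (a : α) : IsPMF (condDist μ X Y b₀ a) := by
  refine ⟨fun b => ?_, ?_⟩
  · unfold condDist
    split_ifs
    exacts [zero_le_one, le_rfl, div_nonneg (pr_nonneg hμ _ _) (pr_nonneg hμ _ _)]
  · by_cases h : pr μ X a = 0
    · simp [condDist, h]
    · simp only [condDist, h, if_false]
      rw [← sum_div, sum_pr_prodMk, div_self h]

lemma pr_mul_condDist (a : α) (b : β) :
    pr μ X a * condDist μ X Y b₀ a b = pr μ (fun ω => (X ω, Y ω)) (a, b) := by
  by_cases h : pr μ X a = 0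
  · have hle : pr μ (fun ω => (X ω, Y ω)) (a, b) ≤ pr μ X a :=
      sum_pr_prodMk μ X Y a ▸
        single_le_sum (fun b' _ => pr_nonneg hμ _ (a, b')) (mem_univ b)
    rw [h, zero_mul, le_antisymm (h ▸ hle) (pr_nonneg hμ _ _)]
  · simp only [condDist, h, if_false]
    field_simp

end CondDist

section ProdPMF

variable {α β γ δ : Type*} [Fintype α] [Fintype γ]

def prodPMF (p : α → ℝ) (ν : γ → ℝ) (x : α × γ) : ℝ := p x.1 * ν x.2

variable {p : α → ℝ} {ν : γ → ℝ}

lemma IsPMF.prod (hp : IsPMF p) (hν : IsPMF ν) : IsPMF (prodPMF p ν) :=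
  ⟨fun x => mul_nonneg (hp.1 _) (hν.1 _), by
    simp only [prodPMF]
    rw [Fintype.sum_prod_type, ← Fintype.sum_mul_sum, hp.2, hν.2, one_mul]⟩

lemma pr_prodPMF_mk (p : α → ℝ) (ν : γ → ℝ) (h : α → γ → β) (a : α) (b : β) :
    pr (prodPMF p ν) (fun x => (x.1, h x.1 x.2)) (a, b) = p a * pr ν (h a) b := by
  simp [pr, prodPMF, Fintype.sum_prod_type, ite_and, mul_sum]

lemma pr_prodPMF_fst (p : α → ℝ) (hν : ∑ c, ν c = 1) (a : α) :
    pr (prodPMF p ν) Prod.fst a = p a := by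
  simp [pr, prodPMF, Fintype.sum_prod_type, ← mul_sum, hν]

lemma pr_prodPMF_snd (hp : ∑ a, p a = 1) (ν : γ → ℝ) (k : γ → δ) (d : δ) :
    pr (prodPMF p ν) (fun x => k x.2) d = pr ν k d := by
  simp only [pr, prodPMF, Fintype.sum_prod_type]
  rw [sum_comm]
  refine sum_congr rfl fun c _ => ?_
  split_ifs <;> simp [← sum_mul, hp]

lemma indepRV_prodPMF (hp : ∑ a, p a = 1) (hν : ∑ c, ν c = 1) (k : γ → δ) :
    IndepRV (prodPMF p ν) Prod.fst (fun x => k x.2) := by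
  intro a d
  rw [pr_prodPMF_mk p ν (fun _ => k), pr_prodPMF_fst p hν, pr_prodPMF_snd hp]

end ProdPMF

section PiPMF

variable {α β : Type*} [Fintype α] [Fintype β]

def piPMF (q : α → β → ℝ) (f : α → β) : ℝ := ∏ a, q a (f a)

variable {q : α → β → ℝ}

lemma IsPMF.pi (hq : ∀ a, IsPMF (q a)) : IsPMF (piPMF q) :=
  ⟨fun f => prod_nonneg fun a _ => (hq a).1 _, by
    simp only [piPMF]
    rw [← Fintype.prod_sum, prod_eq_one fun a _ => (hq a).2]⟩

lemma pr_piPMF_eval (hq : ∀ a, ∑ b, q a b = 1) (a : α) (b : β) :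
    pr (piPMF q) (fun f => f a) b = q a b := by
  let t : ∀ a', Finset β := fun a' => if a' = a then {b} else univ
  have hpi : Fintype.piFinset t = univ.filter fun f : α → β => f a = b := by
    ext f
    simp only [Fintype.mem_piFinset, mem_filter, mem_univ, true_and, t]
    refine ⟨fun h => by simpa using h a, fun h a' => ?_⟩
    split_ifs with ha
    · simp [ha, h]
    · exact mem_univ _
  calc pr (piPMF q) (fun f => f a) b
      = ∑ f ∈ Fintype.piFinset t, ∏ a', q a' (f a') := by rw [hpi, sum_filter]; rfl
    _ = ∏ a', ∑ j ∈ t a', q a' j := (prod_univ_sum t q).symm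
    _ = q a b := by
      rw [prod_eq_single_of_mem a (mem_univ a) fun a' _ ha' => by simp [t, ha', hq a']]
      simp [t]

end PiPMF

/-- Functional Representation Lemma: for any two finite random variables `X` and `Y`
(on a common finite probability space), there exist a probability space, copies
`X'`, `Y'` of `(X, Y)` (same joint distribution), a finite random variable `S'`
independent of `X'`, and a function `g` such that `Y' = g(X', S')` almost surely. -/
theorem functional_representation_lemma
    {Ω α β : Type*} [Fintype Ω] [Fintype α] [Fintype β]
    (μ : Ω → ℝ) (hμ : IsPMF μ) (X : Ω → α) (Y : Ω → β) :
    ∃ (m n : ℕ) (μ' : Fin m → ℝ) (X' : Fin m → α) (Y' : Fin m → β)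
      (S' : Fin m → Fin n) (g : α → Fin n → β),
      IsPMF μ' ∧
      (∀ a b, pr μ' (fun ω => (X' ω, Y' ω)) (a, b) = pr μ (fun ω => (X ω, Y ω)) (a, b)) ∧
      IndepRV μ' X' S' ∧
      (∀ ω, 0 < μ' ω → Y' ω = g (X' ω) (S' ω)) := by
  obtain ⟨ω₀⟩ : Nonempty Ω := by
    by_contra h
    simpa [not_nonempty_iff.mp h] using hμ.2
  let q := condDist μ X Y (Y ω₀)
  have hq : ∀ a, IsPMF (q a) := isPMF_condDist hμ.1 X Y (Y ω₀)
  have hpX : IsPMF (pr μ X) := ⟨pr_nonneg hμ.1 X, (sum_pr μ X).trans hμ.2⟩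
  let μ₀ := prodPMF (pr μ X) (piPMF q)
  let e := Fintype.equivFin (α × (α → β))
  let eS := Fintype.equivFin (α → β)
  refine ⟨_, _, fun i => μ₀ (e.symm i), fun i => (e.symm i).1,
    fun i => (e.symm i).2 (e.symm i).1, fun i => eS (e.symm i).2, fun a s => eS.symm s a,
    (hpX.prod (IsPMF.pi hq)).comp_equiv e, fun a b => ?_,
    (indepRV_prodPMF hpX.2 (IsPMF.pi hq).2 eS).comp_equiv e, fun i _ => by simp⟩
  rw [pr_comp_equiv e μ₀ (fun x => (x.1, x.2 x.1)),
    pr_prodPMF_mk (pr μ X) (piPMF q) fun a f => f a,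
    pr_piPMF_eval fun a => (hq a).2, pr_mul_condDist hμ.1]
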